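/- For positive integers m_1, ..., m_g with m = m_1 + ... + m_g, the function e satisfies Σ_{i=1}^{g} e(m_i) ≤ e(m − g + 1), where e(g) = Σ t_i·2^{t_i−1} + Σ i·2^{t_i} via the binary expansion of g and e(0) = 0. -/

import Mathlib

/-- The strictly decreasing list of exponents `t_0 > t_1 > ⋯ > t_s` in the
binary expansion `g = Σ_{i=0}^{s} 2^(t_i)` of `g`. -/
def expList (g : ℕ) : List ℕ :=
  (((Finset.range (g + 1)).filter (fun k => g.testBit k)).sort (· ≤ ·)).reverse

/-- `e g = Σ_{i=0}^{s} t_i·2^(t_i−1) + Σ_{i=0}^{s} i·2^(t_i)` over the binary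
expansion `g = Σ_{i=0}^{s} 2^(t_i)` with `t_0 > t_1 > ⋯ > t_s ≥ 0` (and `e 0 = 0`). -/
def eHL (g : ℕ) : ℕ :=
  ((expList g).zipIdx.map (fun p => p.1 * 2 ^ (p.1 - 1) + p.2 * 2 ^ p.1)).sum

/-!
The vertices `0, …, n - 1` of the hypercube span `F n = ∑_{i < n} popcount i` edges, since
flipping a one-bit of `i` gives exactly its `popcount i` smaller neighbours. Splitting off the
top bit `2^t` of `n` shows that `F` satisfies the same recursion as `e`, so `e = F`. Splitting
`{0, …, 2n - 1}` and `{0, …, 2n}` by parity gives `F (p + q) = F p + F q + min p q` whenever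
`|p - q| ≤ 1`, and halving both arguments then yields `F a + F b + min a b ≤ F (a + b)` by
strong induction. Since `popcount x ≤ x`, this gives `F (x + 1) + F (y + 1) ≤ F (x + y + 1)`,
which is iterated over the `m_i`.
-/

namespace Nat

def popcount (n : ℕ) : ℕ := n.bitIndices.length

def popcountSum (n : ℕ) : ℕ := ∑ i ∈ Finset.range n, popcount i

theorem bitIndices_two_pow_add {t r : ℕ} (hr : r < 2 ^ t) :
    (2 ^ t + r).bitIndices = r.bitIndices ++ [t] := by
  have hsorted : (r.bitIndices ++ [t]).SortedLT := by
    rw [List.sortedLT_iff_pairwise, List.pairwise_append]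
    refine ⟨bitIndices_sorted.pairwise, List.pairwise_singleton _ _, ?_⟩
    intro a ha b hb
    rw [List.mem_singleton.mp hb]
    exact (Nat.pow_lt_pow_iff_right (by norm_num)).mp
      ((two_pow_le_of_mem_bitIndices ha).trans_lt hr)
  conv_lhs => rw [add_comm, ← sum_map_two_pow_bitIndices r]
  simpa using bitIndices_sum_map_two_pow hsorted

@[simp] theorem popcount_two_mul (n : ℕ) : popcount (2 * n) = popcount n := by
  simp [popcount]

@[simp] theorem popcount_two_mul_add_one (n : ℕ) : popcount (2 * n + 1) = popcount n + 1 := by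
  simp [popcount]

theorem popcount_two_pow_add {t r : ℕ} (hr : r < 2 ^ t) :
    popcount (2 ^ t + r) = popcount r + 1 := by
  simp [popcount, bitIndices_two_pow_add hr]

theorem popcount_le_self (n : ℕ) : popcount n ≤ n := by
  conv_rhs => rw [← sum_map_two_pow_bitIndices n]
  simpa [popcount] using List.length_le_sum_of_one_le (n.bitIndices.map (2 ^ ·))
    (by simp [Nat.one_le_two_pow])

@[simp] theorem popcountSum_zero : popcountSum 0 = 0 := rfl

theorem popcountSum_succ (n : ℕ) : popcountSum (n + 1) = popcountSum n + popcount n :=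
  Finset.sum_range_succ _ _

theorem popcountSum_two_mul (n : ℕ) : popcountSum (2 * n) = 2 * popcountSum n + n := by
  induction n with
  | zero => rfl
  | succ n ih =>
    rw [mul_add_one, popcountSum_succ, popcountSum_succ, popcountSum_succ, ih]
    simp only [popcount_two_mul, popcount_two_mul_add_one]
    ring

theorem popcountSum_two_mul_add_one (n : ℕ) :
    popcountSum (2 * n + 1) = popcountSum n + popcountSum (n + 1) + n := by
  rw [popcountSum_succ, popcountSum_two_mul, popcount_two_mul, popcountSum_succ]
  ring

theorem popcountSum_add_of_le_of_le {p q : ℕ} (hpq : p ≤ q + 1) (hqp : q ≤ p + 1) :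
    popcountSum (p + q) = popcountSum p + popcountSum q + min p q := by
  rcases (by omega : q = p ∨ q = p + 1 ∨ p = q + 1) with rfl | rfl | rfl
  · rw [← two_mul, popcountSum_two_mul, min_self]
    ring
  · rw [← add_assoc, ← two_mul, popcountSum_two_mul_add_one, min_eq_left (by omega)]
  · rw [add_comm, ← add_assoc, ← two_mul, popcountSum_two_mul_add_one, min_eq_right (by omega)]
    ring

theorem popcountSum_two_pow (t : ℕ) : popcountSum (2 ^ t) = t * 2 ^ (t - 1) := by
  induction t with
  | zero => rfl
  | succ t ih =>
    rw [pow_succ, mul_two, popcountSum_add_of_le_of_le (by omega) (by omega), ih, min_self]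
    cases t with
    | zero => rfl
    | succ t => simp only [add_tsub_cancel_right, pow_succ]; ring

theorem popcountSum_two_pow_add {t r : ℕ} (hr : r ≤ 2 ^ t) :
    popcountSum (2 ^ t + r) = t * 2 ^ (t - 1) + r + popcountSum r := by
  induction r with
  | zero => simp [popcountSum_two_pow]
  | succ r ih =>
    rw [← add_assoc, popcountSum_succ, ih (by omega), popcount_two_pow_add (by omega),
      popcountSum_succ]
    ring

theorem popcountSum_add_add_min_le (a b : ℕ) :
    popcountSum a + popcountSum b + min a b ≤ popcountSum (a + b) := by
  induction h : a + b using Nat.strong_induction_on generalizing a b with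
  | _ n ih =>
    subst h
    rcases Nat.eq_zero_or_pos a with rfl | ha
    · simp
    rcases Nat.eq_zero_or_pos b with rfl | hb
    · simp
    -- halve `a`, `b` and `a + b` compatibly: `a₁ + b₁ = (a + b) / 2`
    set a₁ := a / 2
    set b₁ := (a + b) / 2 - a / 2
    have ha' := popcountSum_add_of_le_of_le (p := a₁) (q := a - a₁) (by omega) (by omega)
    have hb' := popcountSum_add_of_le_of_le (p := b₁) (q := b - b₁) (by omega) (by omega)
    have hab := popcountSum_add_of_le_of_le (p := a₁ + b₁) (q := a - a₁ + (b - b₁))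
      (by omega) (by omega)
    have ih₁ := ih _ (by omega) a₁ b₁ rfl
    have ih₂ := ih _ (by omega) (a - a₁) (b - b₁) rfl
    rw [add_tsub_cancel_of_le (by omega)] at ha'
    rw [add_tsub_cancel_of_le (by omega)] at hb'
    rw [show a₁ + b₁ + (a - a₁ + (b - b₁)) = a + b by omega] at hab
    omega

theorem popcountSum_succ_add_popcountSum_succ_le (x y : ℕ) :
    popcountSum (x + 1) + popcountSum (y + 1) ≤ popcountSum (x + y + 1) := by
  wlog hxy : x ≤ y generalizing x y
  · have := this y x (by omega)
    rwa [add_comm y x, add_comm (popcountSum (y + 1))] at this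
  calc popcountSum (x + 1) + popcountSum (y + 1)
      = popcountSum x + popcountSum (y + 1) + popcount x := by rw [popcountSum_succ]; ring
    _ ≤ popcountSum x + popcountSum (y + 1) + min x (y + 1) := by
      rw [min_eq_left (by omega)]
      exact Nat.add_le_add_left (popcount_le_self x) _
    _ ≤ popcountSum (x + y + 1) := popcountSum_add_add_min_le x (y + 1)

theorem sum_popcountSum_succ_le {ι : Type*} (s : Finset ι) (n : ι → ℕ) :
    ∑ i ∈ s, popcountSum (n i + 1) ≤ popcountSum (∑ i ∈ s, n i + 1) := by
  induction s using Finset.cons_induction with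
  | empty => simp
  | cons a s has ih =>
    rw [Finset.sum_cons, Finset.sum_cons, add_assoc]
    exact (Nat.add_le_add_left ih _).trans (popcountSum_succ_add_popcountSum_succ_le _ _)

end Nat

open Nat

theorem expList_eq_reverse_bitIndices (g : ℕ) : expList g = g.bitIndices.reverse := by
  rw [expList, List.reverse_inj]
  refine (Finset.sortedLT_sort _).eq_of_mem_iff bitIndices_sorted fun k => ?_
  simp only [Finset.mem_sort, Finset.mem_filter, Finset.mem_range, mem_bitIndices,
    and_iff_right_iff_imp]
  intro hk
  have := two_pow_le_of_mem_bitIndices (mem_bitIndices.mpr hk)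
  have := k.lt_two_pow_self
  omega

theorem eHL_two_pow_add {t r : ℕ} (hr : r < 2 ^ t) :
    eHL (2 ^ t + r) = t * 2 ^ (t - 1) + r + eHL r := by
  have hfst : (r.bitIndices.reverse.zipIdx.map fun p => 2 ^ p.1).sum = r := by
    rw [show (fun p : ℕ × ℕ => 2 ^ p.1) = (2 ^ ·) ∘ Prod.fst from rfl, ← List.map_map,
      List.zipIdx_map_fst, List.map_reverse, List.sum_reverse, sum_map_two_pow_bitIndices]
  simp only [eHL, expList_eq_reverse_bitIndices, bitIndices_two_pow_add hr, List.reverse_append,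
    List.reverse_singleton, List.singleton_append, List.zipIdx_cons, List.zipIdx_succ,
    List.map_cons, List.map_map, List.sum_cons, Function.comp_def, add_mul, one_mul, zero_mul,
    add_zero, List.sum_map_add, hfst]
  ring

theorem eHL_eq_popcountSum (g : ℕ) : eHL g = popcountSum g := by
  induction g using Nat.strong_induction_on with
  | _ g ih =>
    rcases Nat.eq_zero_or_pos g with rfl | hg
    · simp [eHL, expList_eq_reverse_bitIndices]
    have hle := Nat.pow_log_le_self 2 hg.ne'
    have hlt := Nat.lt_pow_succ_log_self (b := 2) (by norm_num) g
    rw [pow_succ] at hlt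
    have hr : g - 2 ^ Nat.log 2 g < 2 ^ Nat.log 2 g := by omega
    rw [← Nat.add_sub_cancel' hle, eHL_two_pow_add hr, popcountSum_two_pow_add hr.le,
      ih _ (by omega)]

theorem eHL_sum_le_general (g : ℕ) (m : Fin g → ℕ) (hm : ∀ i, 1 ≤ m i) :
    ∑ i, eHL (m i) ≤ eHL ((∑ i, m i) - g + 1) := by
  have hsub : ∑ i, (m i - 1) = (∑ i, m i) - g := by
    simpa using Finset.sum_tsub_distrib Finset.univ (fun i _ => hm i)
  simp only [eHL_eq_popcountSum, ← hsub]
  calc ∑ i, popcountSum (m i) = ∑ i, popcountSum (m i - 1 + 1) := by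
        simp only [Nat.sub_add_cancel (hm _)]
    _ ≤ _ := sum_popcountSum_succ_le _ _

theorem eHL_sum_le (g : ℕ) (hg : 0 < g) (m : Fin g → ℕ) (hm : ∀ i, 1 ≤ m i) :
    ∑ i, eHL (m i) ≤ eHL ((∑ i, m i) - g + 1) :=
  eHL_sum_le_general g m hm
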